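/- arXiv:2509.12522 — 2 statements merged into one kernel-verified Lean document; each statement's English description precedes it below -/
import Mathlib

section
/- Let N ≥ 1 and let S_1, …, S_{N+1} be real-valued random variables on a probability space that are exchangeable (for every permutation σ of {1, …, N+1}, the joint law of (S_{σ(1)}, …, S_{σ(N+1)}) equals the joint law of (S_1, …, S_{N+1})) and almost surely pairwise distinct. Then the rank of S_{N+1} among S_1, …, S_{N+1} (i.e., the number of indices i ∈ {1, …, N+1} with S_i ≤ S_{N+1}) is uniformly distributed on {1, …, N+1}: for every k ∈ {1, …, N+1}, the probability that the rank equals k is 1/(N+1). -/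
open MeasureTheory

/-!
Almost surely the values `S i` are distinct, and then the ranks of the coordinates are a
permutation of `{1, …, N+1}`: for each `k` exactly one index has rank `k`, so the events
"`S j` has rank `k`" (over `j`) have probabilities summing to `1`. Exchangeability under the
transposition of `j` and the last index shows that all these probabilities are equal.
-/

section Rank

variable {ι α : Type*} [Fintype ι] [LinearOrder α]

def rank (x : ι → α) (j : ι) : ℕ :=
  (Finset.univ.filter fun i => x i ≤ x j).card

theorem rank_le_rank {x : ι → α} {a b : ι} (h : x a ≤ x b) : rank x a ≤ rank x b :=
  Finset.card_le_card fun _ hi => by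
    simp only [Finset.mem_filter, Finset.mem_univ, true_and] at hi ⊢
    exact hi.trans h

theorem rank_lt_rank_iff {x : ι → α} {a b : ι} : rank x a < rank x b ↔ x a < x b := by
  refine ⟨fun h => not_le.mp fun hba => h.not_ge (rank_le_rank hba), fun h => ?_⟩
  refine Finset.card_lt_card <| Finset.ssubset_iff_of_subset (fun i hi => ?_) |>.2
    ⟨b, by simp, by simp [h]⟩
  simp only [Finset.mem_filter, Finset.mem_univ, true_and] at hi ⊢
  exact hi.trans h.le

theorem rank_injective {x : ι → α} (hx : Function.Injective x) :
    Function.Injective (rank x) := by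
  intro a b hab
  by_contra hne
  rcases lt_or_gt_of_ne (hx.ne hne) with h | h
  · exact (rank_lt_rank_iff.mpr h).ne hab
  · exact (rank_lt_rank_iff.mpr h).ne hab.symm

theorem rank_mem_Icc (x : ι → α) (j : ι) : rank x j ∈ Finset.Icc 1 (Fintype.card ι) :=
  Finset.mem_Icc.mpr
    ⟨Finset.card_pos.mpr ⟨j, by simp⟩, Finset.card_le_univ _⟩

theorem image_rank_eq_Icc {x : ι → α} (hx : Function.Injective x) :
    Finset.univ.image (rank x) = Finset.Icc 1 (Fintype.card ι) :=
  Finset.eq_of_subset_of_card_le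
    (Finset.image_subset_iff.mpr fun j _ => rank_mem_Icc x j)
    (by rw [Finset.card_image_of_injective _ (rank_injective hx)]; simp)

theorem card_filter_rank_eq {x : ι → α} (hx : Function.Injective x) {k : ℕ}
    (hk : k ∈ Finset.Icc 1 (Fintype.card ι)) :
    (Finset.univ.filter fun j => rank x j = k).card = 1 := by
  rw [← image_rank_eq_Icc hx, Finset.mem_image] at hk
  obtain ⟨j₀, -, rfl⟩ := hk
  rw [Finset.card_eq_one]
  exact ⟨j₀, Finset.ext fun j => by simpa using (rank_injective hx).eq_iff⟩

theorem rank_comp_perm (x : ι → α) (σ : Equiv.Perm ι) (j : ι) :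
    rank (x ∘ σ) j = rank x (σ j) := by
  simp only [rank, Finset.card_filter]
  exact Fintype.sum_equiv σ _ _ fun _ => rfl

end Rank

section Exchangeable

variable {Ω ι α : Type*} [MeasurableSpace Ω] [Fintype ι]
  [LinearOrder α] [TopologicalSpace α] [MeasurableSpace α] [OpensMeasurableSpace α]
  [OrderClosedTopology α] [SecondCountableTopology α]
  {P : Measure Ω} {X : Ω → ι → α}

theorem measurable_rank (j : ι) : Measurable fun x : ι → α => rank x j := by
  simp only [rank, Finset.card_filter]
  exact Finset.measurable_sum _ fun i _ => Measurable.ite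
    (measurableSet_le (measurable_pi_apply i) (measurable_pi_apply j))
    measurable_const measurable_const

theorem measure_rank_eq_of_exchangeable (hX : Measurable X)
    (hexch : ∀ σ : Equiv.Perm ι, P.map (fun ω => X ω ∘ σ) = P.map X) (i j : ι) (k : ℕ) :
    P {ω | rank (X ω) i = k} = P {ω | rank (X ω) j = k} := by
  classical
  let σ := Equiv.swap i j
  have hmeas_rank : MeasurableSet {x : ι → α | rank x j = k} :=
    measurable_rank j (MeasurableSet.singleton k)
  have hXσ : Measurable fun ω => X ω ∘ σ :=
    measurable_pi_lambda _ fun l => (measurable_pi_apply (σ l)).comp hX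
  have hpre : {ω | rank (X ω) i = k} = (fun ω => X ω ∘ σ) ⁻¹' {x | rank x j = k} := by
    ext ω
    simp [rank_comp_perm, σ]
  rw [hpre, ← Measure.map_apply hXσ hmeas_rank, hexch, Measure.map_apply hX hmeas_rank]
  rfl

theorem sum_measure_rank_eq_one [IsProbabilityMeasure P] (hX : Measurable X)
    (hinj : ∀ᵐ ω ∂P, Function.Injective (X ω)) {k : ℕ}
    (hk : k ∈ Finset.Icc 1 (Fintype.card ι)) :
    ∑ j, P {ω | rank (X ω) j = k} = 1 := by
  have hA : ∀ j, MeasurableSet {ω | rank (X ω) j = k} := fun j =>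
    (measurable_rank j).comp hX (MeasurableSet.singleton k)
  have hcount : ∀ᵐ ω ∂P,
      ∑ j, {ω | rank (X ω) j = k}.indicator (1 : Ω → ENNReal) ω = 1 := by
    filter_upwards [hinj] with ω hω
    simp only [Set.indicator_apply, Set.mem_ofPred_eq, Pi.one_apply]
    rw [Finset.sum_boole, card_filter_rank_eq hω hk, Nat.cast_one]
  calc ∑ j, P {ω | rank (X ω) j = k}
      = ∑ j, ∫⁻ ω, {ω | rank (X ω) j = k}.indicator 1 ω ∂P := by
        simp only [lintegral_indicator_one (hA _)]
    _ = ∫⁻ ω, ∑ j, {ω | rank (X ω) j = k}.indicator 1 ω ∂P :=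
        (lintegral_finsetSum _ fun j _ => measurable_one.indicator (hA j)).symm
    _ = 1 := by rw [lintegral_congr_ae hcount, lintegral_one, measure_univ]

theorem measure_rank_eq_inv_card [IsProbabilityMeasure P] (hX : Measurable X)
    (hexch : ∀ σ : Equiv.Perm ι, P.map (fun ω => X ω ∘ σ) = P.map X)
    (hinj : ∀ᵐ ω ∂P, Function.Injective (X ω)) (j : ι) {k : ℕ}
    (hk : k ∈ Finset.Icc 1 (Fintype.card ι)) :
    P {ω | rank (X ω) j = k} = (Fintype.card ι : ENNReal)⁻¹ := by
  have hsum := sum_measure_rank_eq_one hX hinj hk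
  simp only [measure_rank_eq_of_exchangeable hX hexch _ j k, Finset.sum_const,
    Finset.card_univ, nsmul_eq_mul] at hsum
  exact ENNReal.eq_inv_of_mul_eq_one_left (by rwa [mul_comm])

end Exchangeable

theorem rank_uniform_general
    {Ω : Type*} [MeasurableSpace Ω] (P : Measure Ω) [IsProbabilityMeasure P]
    (N : ℕ) (S : Fin (N + 1) → Ω → ℝ)
    (hmeas : ∀ i, Measurable (S i))
    (hexch : ∀ π : Equiv.Perm (Fin (N + 1)),
      Measure.map (fun ω => fun i => S (π i) ω) P
        = Measure.map (fun ω => fun i => S i ω) P)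
    (hdist : ∀ i j, i ≠ j → P {ω | S i ω = S j ω} = 0)
    (k : ℕ) (hk1 : 1 ≤ k) (hk2 : k ≤ N + 1) :
    P {ω | (Finset.univ.filter (fun i => S i ω ≤ S (Fin.last N) ω)).card = k}
      = ((N : ENNReal) + 1)⁻¹ := by
  have hinj : ∀ᵐ ω ∂P, Function.Injective fun i => S i ω := by
    simp only [Function.Injective, ae_all_iff]
    intro i j
    by_cases hij : i = j
    · exact .of_forall fun _ _ => hij
    · filter_upwards [measure_eq_zero_iff_ae_notMem.mp (hdist i j hij)] with ω hω h
      exact absurd h hω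
  have hk : k ∈ Finset.Icc 1 (Fintype.card (Fin (N + 1))) := by simp [hk1, hk2]
  simpa [rank] using
    measure_rank_eq_inv_card (measurable_pi_lambda _ hmeas) hexch hinj (Fin.last N) hk

/-- For exchangeable, a.s. pairwise distinct real random variables
`S 0, …, S N` (that is, `N + 1` of them), the rank of the last one among all of
them, i.e. `#{i : S i ≤ S (Fin.last N)}`, is uniformly distributed on `{1, …, N+1}`. -/
theorem rank_uniform
    {Ω : Type*} [MeasurableSpace Ω] (P : Measure Ω) [IsProbabilityMeasure P]
    (N : ℕ) (hN : 1 ≤ N) (S : Fin (N + 1) → Ω → ℝ)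
    (hmeas : ∀ i, Measurable (S i))
    (hexch : ∀ π : Equiv.Perm (Fin (N + 1)),
      Measure.map (fun ω => fun i => S (π i) ω) P
        = Measure.map (fun ω => fun i => S i ω) P)
    (hdist : ∀ i j, i ≠ j → P {ω | S i ω = S j ω} = 0)
    (k : ℕ) (hk1 : 1 ≤ k) (hk2 : k ≤ N + 1) :
    P {ω | (Finset.univ.filter (fun i => S i ω ≤ S (Fin.last N) ω)).card = k}
      = ((N : ENNReal) + 1)⁻¹ :=
  rank_uniform_general P N S hmeas hexch hdist k hk1 hk2
end

section
/- (Marginal split conformal coverage, Theorem 1.) Let N ≥ 1, let α ∈ (0, 1) satisfy ⌈(N+1)(1−α)⌉ ≤ N, and let S_1, …, S_N, S_{N+1} be real-valued random variables that are exchangeable and almost surely pairwise distinct. Define the conformal quantile q_α = S_{(⌈(N+1)(1−α)⌉)}, the ⌈(N+1)(1−α)⌉-th smallest of the calibration scores S_1, …, S_N. Then the event {S_{N+1} ≤ q_α} (equivalently, the event that the test point lies in the conformal prediction set) satisfies the tight probabilistic coverage bound 1 − α ≤ ℙ(S_{N+1} ≤ q_α) ≤ 1 − α + 1/(N+1). 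-/
/-!
Let `R j` be the number of scores strictly below `S j`. For `1 ≤ k ≤ N` the test score is at
most the `k`-th smallest calibration score exactly when `R (N + 1) < k`. Exchangeability makes
`ℙ(R j < k)` the same for every `j`, and when the scores are distinct the ranks are a permutation
of `0, …, N`, so exactly `k` of the events `R j < k` occur. Hence `ℙ(S (N + 1) ≤ q_α) = k / (N + 1)`
with `k = ⌈(N + 1)(1 - α)⌉`, which lies in `[(N + 1)(1 - α), (N + 1)(1 - α) + 1)`.
-/

open MeasureTheory

/-- The `k`-th smallest value (k = 1, …, m) among `v 0, …, v (m-1)`. -/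
noncomputable def orderStat {m : ℕ} (v : Fin m → ℝ) (k : ℕ) : ℝ :=
  ((List.ofFn v).insertionSort (· ≤ ·)).getD (k - 1) 0

open Finset Function
open scoped ENNReal

theorem List.countP_ofFn {α : Type*} {n : ℕ} (f : Fin n → α) (p : α → Prop) [DecidablePred p] :
    (List.ofFn f).countP (p ·) = #{i | p (f i)} := by
  rw [List.ofFn_eq_map, List.countP_map, List.countP_eq_length_filter, Fin.univ_def]
  simp only [Finset.filter, Finset.card, Multiset.filter_coe, Multiset.coe_card]
  rfl

theorem Monotone.lt_iff_lt_card_filter_lt {α : Type*} [LinearOrder α] {n : ℕ} {f : Fin n → α}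
    (hf : Monotone f) (x : α) (j : Fin n) :
    f j < x ↔ (j : ℕ) < #{i | f i < x} := by
  constructor
  · intro h
    calc (j : ℕ) < #(Iic j) := by simp
      _ ≤ _ := card_le_card fun i hi => by simpa using (hf (mem_Iic.1 hi)).trans_lt h
  · contrapose!
    intro h
    calc #{i | f i < x} ≤ #(Iio j) := card_le_card fun i hi => by
          simp only [mem_filter, mem_univ, true_and] at hi
          simpa using lt_of_not_ge fun hji => (h.trans (hf hji)).not_gt hi
      _ = j := by simp

theorem ae_injective_of_measure_eq_zero {Ω ι β : Type*} [MeasurableSpace Ω] {P : Measure Ω}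
    [Countable ι] {S : ι → Ω → β} (h : ∀ i j, i ≠ j → P {ω | S i ω = S j ω} = 0) :
    ∀ᵐ ω ∂P, Injective fun i => S i ω := by
  have hpair : ∀ i j, ∀ᵐ ω ∂P, S i ω = S j ω → i = j := fun i j => by
    by_cases hij : i = j
    · exact ae_of_all _ fun _ _ => hij
    · exact ae_iff.2 (by simpa [hij] using h i j hij)
  filter_upwards [ae_all_iff.2 fun i => ae_all_iff.2 (hpair i)] with ω hω i j using hω i j

theorem sum_measure_eq_of_ae_sum_indicator {Ω ι : Type*} [MeasurableSpace Ω] {P : Measure Ω}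
    [IsProbabilityMeasure P] [Fintype ι] {A : ι → Set Ω} (hA : ∀ j, MeasurableSet (A j))
    {c : ℝ≥0∞} (h : ∀ᵐ ω ∂P, ∑ j, (A j).indicator 1 ω = c) :
    ∑ j, P (A j) = c :=
  calc ∑ j, P (A j) = ∑ j, ∫⁻ ω, (A j).indicator 1 ω ∂P := by
        simp only [lintegral_indicator_one (hA _)]
    _ = ∫⁻ ω, ∑ j, (A j).indicator 1 ω ∂P :=
        (lintegral_finsetSum _ fun j _ => measurable_one.indicator (hA j)).symm
    _ = c := by rw [lintegral_congr_ae h, lintegral_const, measure_univ, mul_one]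

namespace SplitConformal

section Rank

variable {ι α : Type*} [Fintype ι] [LinearOrder α]

def rank (v : ι → α) (j : ι) : ℕ := #{i | v i < v j}

theorem rank_lt_rank {v : ι → α} {i j : ι} (h : v i < v j) : rank v i < rank v j := by
  refine card_lt_card <| (ssubset_iff_of_subset fun l hl => ?_).2 ⟨i, ?_, ?_⟩
  · simp only [mem_filter, mem_univ, true_and] at hl ⊢
    exact hl.trans h
  all_goals simp [h]

theorem rank_lt_card (v : ι → α) (j : ι) : rank v j < Fintype.card ι :=
  card_lt_univ_of_notMem (x := j) (by simp)

theorem rank_injective {v : ι → α} (hv : Injective v) : Injective (rank v) := by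
  intro i j h
  rcases lt_trichotomy (v i) (v j) with hij | hij | hij
  · exact absurd h (rank_lt_rank hij).ne
  · exact hv hij
  · exact absurd h (rank_lt_rank hij).ne'

theorem card_rank_lt {v : ι → α} (hv : Injective v) {k : ℕ} (hk : k ≤ Fintype.card ι) :
    #{j | rank v j < k} = k := by
  let e : ι ≃ Fin (Fintype.card ι) := Equiv.ofBijective (fun j => ⟨rank v j, rank_lt_card v j⟩)
    ((Fintype.bijective_iff_injective_and_card _).2
      ⟨fun i j h => rank_injective hv (Fin.mk.inj h), (Fintype.card_fin _).symm⟩)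
  calc #{j | rank v j < k} = #{r : Fin (Fintype.card ι) | (r : ℕ) < k} := by
        simp only [← Fintype.card_subtype]
        exact Fintype.card_congr (e.subtypeEquiv fun j => Iff.rfl)
    _ = k := by rw [Fin.card_filter_val_lt, min_eq_right hk]

theorem rank_comp_perm (v : ι → α) (σ : Equiv.Perm ι) (j : ι) :
    rank (v ∘ σ) j = rank v (σ j) := by
  simp only [rank, ← Fintype.card_subtype]
  exact Fintype.card_congr (σ.subtypeEquiv fun i => Iff.rfl)

end Rank

theorem orderStat_lt_iff {m : ℕ} (v : Fin m → ℝ) {k : ℕ} (hk1 : 1 ≤ k) (hkm : k ≤ m) (x : ℝ) :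
    orderStat v k < x ↔ k ≤ #{i | v i < x} := by
  set L := (List.ofFn v).insertionSort (· ≤ ·)
  have hmono : Monotone L.get := List.sortedLE_insertionSort
  have hcount : #{i | L.get i < x} = #{i | v i < x} := by
    rw [← List.countP_ofFn L.get (· < x), ← List.countP_ofFn v (· < x), List.ofFn_get,
      (List.perm_insertionSort _ _).countP_eq]
  have hk : k - 1 < L.length := by simp [L]; omega
  rw [orderStat, List.getD_eq_getElem _ _ hk]
  exact (hmono.lt_iff_lt_card_filter_lt x ⟨k - 1, hk⟩).trans (by rw [hcount, Fin.val_mk]; omega)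

theorem le_orderStat_iff_rank_lt {n : ℕ} (v : Fin (n + 1) → ℝ) {k : ℕ} (hk1 : 1 ≤ k)
    (hkn : k ≤ n) :
    v (Fin.last n) ≤ orderStat (fun i : Fin n => v i.castSucc) k ↔ rank v (Fin.last n) < k := by
  have hrank : rank v (Fin.last n) = #{i : Fin n | v i.castSucc < v (Fin.last n)} := by
    simp only [rank, card_filter, Fin.sum_univ_castSucc, lt_irrefl, if_false, add_zero]
  rw [← not_lt, orderStat_lt_iff _ hk1 hkn, hrank, not_le]

theorem measurable_rank {ι : Type*} [Fintype ι] (j : ι) :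
    Measurable fun v : ι → ℝ => rank v j := by
  simp only [rank, card_filter]
  exact Finset.measurable_sum _ fun i _ => Measurable.ite
    (measurableSet_lt (measurable_pi_apply i) (measurable_pi_apply j)) measurable_const
    measurable_const

section Exchangeable

variable {Ω ι : Type*} [MeasurableSpace Ω] {P : Measure Ω} [Fintype ι] {S : ι → Ω → ℝ}

theorem measurableSet_rank_lt (hmeas : ∀ i, Measurable (S i)) (k : ℕ) (j : ι) :
    MeasurableSet {ω | rank (fun l => S l ω) j < k} :=
  (measurable_rank j).comp (measurable_pi_lambda _ hmeas) measurableSet_Iio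

theorem measure_rank_lt_eq (hmeas : ∀ i, Measurable (S i))
    (hexch : ∀ π : Equiv.Perm ι, P.map (fun ω i => S (π i) ω) = P.map fun ω i => S i ω)
    (k : ℕ) (i j : ι) :
    P {ω | rank (fun l => S l ω) i < k} = P {ω | rank (fun l => S l ω) j < k} := by
  classical
  have hB : MeasurableSet {v : ι → ℝ | rank v j < k} := measurable_rank j measurableSet_Iio
  have hswap : {ω | rank (fun l => S l ω) i < k}
      = (fun ω l => S (Equiv.swap i j l) ω) ⁻¹' {v | rank v j < k} := by
    ext ω
    change rank _ i < k ↔ rank ((fun l => S l ω) ∘ Equiv.swap i j) j < k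
    rw [rank_comp_perm, Equiv.swap_apply_right]
  rw [hswap, ← Measure.map_apply (measurable_pi_lambda _ fun l => hmeas _) hB, hexch,
    Measure.map_apply (measurable_pi_lambda _ hmeas) hB]
  rfl

theorem card_mul_measure_rank_lt [IsProbabilityMeasure P] (hmeas : ∀ i, Measurable (S i))
    (hexch : ∀ π : Equiv.Perm ι, P.map (fun ω i => S (π i) ω) = P.map fun ω i => S i ω)
    (hinj : ∀ᵐ ω ∂P, Injective fun i => S i ω) {k : ℕ} (hk : k ≤ Fintype.card ι) (j : ι) :
    Fintype.card ι * P {ω | rank (fun l => S l ω) j < k} = k := by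
  have hsum : ∑ i, P {ω | rank (fun l => S l ω) i < k} = k := by
    refine sum_measure_eq_of_ae_sum_indicator (measurableSet_rank_lt hmeas k) ?_
    filter_upwards [hinj] with ω hω
    simp only [Set.indicator_apply, Set.mem_ofPred_eq, Pi.one_apply, sum_boole,
      card_rank_lt hω hk]
  rw [← hsum, sum_congr rfl fun i _ => measure_rank_lt_eq hmeas hexch k i j, sum_const,
    card_univ, nsmul_eq_mul]

theorem toReal_measure_le_orderStat [IsProbabilityMeasure P] {N : ℕ}
    {S : Fin (N + 1) → Ω → ℝ} (hmeas : ∀ i, Measurable (S i))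
    (hexch : ∀ π : Equiv.Perm (Fin (N + 1)),
      P.map (fun ω i => S (π i) ω) = P.map fun ω i => S i ω)
    (hdist : ∀ i j, i ≠ j → P {ω | S i ω = S j ω} = 0) {k : ℕ} (hk1 : 1 ≤ k) (hkN : k ≤ N) :
    (P {ω | S (Fin.last N) ω ≤ orderStat (fun i : Fin N => S i.castSucc ω) k}).toReal
      = k / (N + 1) := by
  have hevent : {ω | S (Fin.last N) ω ≤ orderStat (fun i : Fin N => S i.castSucc ω) k}
      = {ω | rank (fun i => S i ω) (Fin.last N) < k} :=
    Set.ext fun ω => le_orderStat_iff_rank_lt (fun i => S i ω) hk1 hkN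
  have h := congrArg ENNReal.toReal <| card_mul_measure_rank_lt hmeas hexch
    (ae_injective_of_measure_eq_zero hdist) (k := k) (by simpa using hkN.trans N.le_succ)
    (Fin.last N)
  rw [ENNReal.toReal_mul, Fintype.card_fin, ENNReal.toReal_natCast, ENNReal.toReal_natCast,
    Nat.cast_succ] at h
  rw [hevent, eq_div_iff (by positivity), mul_comm, h]

end Exchangeable

end SplitConformal

theorem marginal_split_conformal_coverage_general
    {Ω : Type*} [MeasurableSpace Ω] (P : Measure Ω) [IsProbabilityMeasure P]
    (N : ℕ) (α : ℝ) (hα1 : α < 1)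
    (hk : ⌈((N : ℝ) + 1) * (1 - α)⌉ ≤ (N : ℤ))
    (S : Fin (N + 1) → Ω → ℝ)
    (hmeas : ∀ i, Measurable (S i))
    (hexch : ∀ π : Equiv.Perm (Fin (N + 1)),
      Measure.map (fun ω => fun i => S (π i) ω) P
        = Measure.map (fun ω => fun i => S i ω) P)
    (hdist : ∀ i j, i ≠ j → P {ω | S i ω = S j ω} = 0) :
    1 - α ≤ (P {ω | S (Fin.last N) ω ≤
        orderStat (fun i : Fin N => S i.castSucc ω) (⌈((N : ℝ) + 1) * (1 - α)⌉).toNat}).toReal ∧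
      (P {ω | S (Fin.last N) ω ≤
        orderStat (fun i : Fin N => S i.castSucc ω) (⌈((N : ℝ) + 1) * (1 - α)⌉).toNat}).toReal
        ≤ 1 - α + 1 / ((N : ℝ) + 1) := by
  set x := ((N : ℝ) + 1) * (1 - α) with hxdef
  have hx : 0 < x := mul_pos (by positivity) (by linarith)
  have hN : (0 : ℝ) < N + 1 := by positivity
  rw [Int.ceil_toNat, SplitConformal.toReal_measure_le_orderStat hmeas hexch hdist
    (Nat.one_le_ceil_iff.2 hx) (Nat.ceil_le.2 (by exact_mod_cast Int.ceil_le.1 hk))]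
  constructor
  · calc 1 - α = x / (N + 1) := by rw [hxdef, mul_div_cancel_left₀ _ hN.ne']
      _ ≤ ⌈x⌉₊ / (N + 1) := by gcongr; exact Nat.le_ceil x
  · calc (⌈x⌉₊ : ℝ) / (N + 1) ≤ (x + 1) / (N + 1) := by
          gcongr; exact (Nat.ceil_lt_add_one hx.le).le
      _ = 1 - α + 1 / (N + 1) := by rw [hxdef, add_div, mul_div_cancel_left₀ _ hN.ne']

/-- Marginal split conformal coverage, Theorem 1: For exchangeable,
a.s. pairwise distinct scores `S 0, …, S N` (calibration scores `S 0, …, S (N-1)` and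
test score `S (Fin.last N)`), with `α ∈ (0,1)` such that `⌈(N+1)(1-α)⌉ ≤ N`, the
conformal quantile `q_α = S_(⌈(N+1)(1-α)⌉)` (order statistic of the calibration scores)
satisfies the tight coverage bound
`1 - α ≤ ℙ(S_{N+1} ≤ q_α) ≤ 1 - α + 1 / (N + 1)`. -/
theorem marginal_split_conformal_coverage
    {Ω : Type*} [MeasurableSpace Ω] (P : Measure Ω) [IsProbabilityMeasure P]
    (N : ℕ) (hN : 1 ≤ N) (α : ℝ) (hα0 : 0 < α) (hα1 : α < 1)
    (hk : ⌈((N : ℝ) + 1) * (1 - α)⌉ ≤ (N : ℤ))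
    (S : Fin (N + 1) → Ω → ℝ)
    (hmeas : ∀ i, Measurable (S i))
    (hexch : ∀ π : Equiv.Perm (Fin (N + 1)),
      Measure.map (fun ω => fun i => S (π i) ω) P
        = Measure.map (fun ω => fun i => S i ω) P)
    (hdist : ∀ i j, i ≠ j → P {ω | S i ω = S j ω} = 0) :
    1 - α ≤ (P {ω | S (Fin.last N) ω ≤
        orderStat (fun i : Fin N => S i.castSucc ω) (⌈((N : ℝ) + 1) * (1 - α)⌉).toNat}).toReal ∧
      (P {ω | S (Fin.last N) ω ≤
        orderStat (fun i : Fin N => S i.castSucc ω) (⌈((N : ℝ) + 1) * (1 - α)⌉).toNat}).toReal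
        ≤ 1 - α + 1 / ((N : ℝ) + 1) :=
  marginal_split_conformal_coverage_general P N α hα1 hk S hmeas hexch hdist
end
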